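/- arXiv:2402.04774 — 2 statements merged into one kernel-verified Lean document; each statement's English description precedes it below -/
import Mathlib

section
/- Let μ : 2^X → ℝ with μ(∅)=0, i ≠ j in X, and define μ' : 2^{X\{i}} → ℝ by μ'(S) = μ(S ∪ {i}) and μ'' : 2^{X\{i}} → ℝ by μ''(S) = μ(S). Then the Murofushi–Soneda interaction index satisfies I_{ij}(μ) = Sh_j(μ') − Sh_j(μ''), where Sh_j denotes the Shapley value of j in the ground set X\{i}. -/
/-!
Removing `i` leaves a ground set of `n - 1` players, so the Shapley weights of the two reduced
games are exactly the interaction weights, and the marginal contribution of `j` to `μ'` minus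
its marginal contribution to `μ''` is the discrete second difference of `μ` at `i, j`.
-/

open Finset

/-- The Shapley value of `j` for a set function `v` on a finite ground set `β`. -/
noncomputable def Sh {β : Type*} [Fintype β] [DecidableEq β] (v : Finset β → ℝ) (j : β) : ℝ :=
  ∑ k ∈ range (Fintype.card β),
    ((Nat.factorial (Fintype.card β - k - 1) * Nat.factorial k : ℕ) : ℝ) /
      (Nat.factorial (Fintype.card β)) *
      ∑ K ∈ (Finset.univ.erase j).powersetCard k, (v (insert j K) - v K)

theorem Sh_comp_image_val {α : Type*} [Fintype α] [DecidableEq α] (p : α → Prop)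
    [DecidablePred p] (v : Finset α → ℝ) (j : α) (hj : p j) :
    Sh (fun S : Finset (Subtype p) => v (S.image Subtype.val)) ⟨j, hj⟩
      = ∑ k ∈ range #(univ.filter p),
          ((Nat.factorial (#(univ.filter p) - k - 1) * Nat.factorial k : ℕ) : ℝ) /
            (Nat.factorial #(univ.filter p)) *
            ∑ K ∈ ((univ.filter p).erase j).powersetCard k, (v (insert j K) - v K) := by
  unfold Sh
  rw [Fintype.card_subtype]
  refine sum_congr rfl fun k _ => congrArg _ ?_
  have hdom : (univ.filter p).erase j
      = (univ.erase ⟨j, hj⟩).map (Function.Embedding.subtype p) := by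
    rw [map_erase, univ_map_subtype]
    rfl
  rw [hdom, powersetCard_map, sum_map]
  refine sum_congr rfl fun K _ => ?_
  simp only [RelEmbedding.coe_toEmbedding, mapEmbedding_apply, map_eq_image,
    Function.Embedding.coe_subtype, image_insert]

theorem interaction_eq_shapley_diff_general {α : Type*} [Fintype α] [DecidableEq α]
    (μ : Finset α → ℝ)
    (i j : α) (hij : i ≠ j) :
    ∑ k ∈ range (Fintype.card α - 1),
      ((Nat.factorial (Fintype.card α - k - 2) * Nat.factorial k : ℕ) : ℝ) /
        (Nat.factorial (Fintype.card α - 1)) *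
        ∑ K ∈ ((Finset.univ.erase i).erase j).powersetCard k,
          (μ (insert i (insert j K)) - μ (insert i K) - μ (insert j K) + μ K)
    = Sh (fun S : Finset {x : α // x ≠ i} => μ (insert i (S.image Subtype.val))) ⟨j, hij.symm⟩
      - Sh (fun S : Finset {x : α // x ≠ i} => μ (S.image Subtype.val)) ⟨j, hij.symm⟩ := by
  rw [Sh_comp_image_val (· ≠ i) (fun T => μ (insert i T)), Sh_comp_image_val (· ≠ i) μ,
    filter_ne', card_erase_of_mem (mem_univ i), card_univ, ← sum_sub_distrib]
  refine sum_congr rfl fun k _ => ?_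
  rw [show Fintype.card α - 1 - k - 1 = Fintype.card α - k - 2 by omega, ← mul_sub,
    ← sum_sub_distrib]
  exact congrArg _ (sum_congr rfl fun K _ => by ring)

theorem interaction_eq_shapley_diff {α : Type*} [Fintype α] [DecidableEq α]
    (μ : Finset α → ℝ) (hμ : μ ∅ = 0) (hn : 2 ≤ Fintype.card α)
    (i j : α) (hij : i ≠ j) :
    ∑ k ∈ range (Fintype.card α - 1),
      ((Nat.factorial (Fintype.card α - k - 2) * Nat.factorial k : ℕ) : ℝ) /
        (Nat.factorial (Fintype.card α - 1)) *
        ∑ K ∈ ((Finset.univ.erase i).erase j).powersetCard k,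
          (μ (insert i (insert j K)) - μ (insert i K) - μ (insert j K) + μ K)
    = Sh (fun S : Finset {x : α // x ≠ i} => μ (insert i (S.image Subtype.val))) ⟨j, hij.symm⟩
      - Sh (fun S : Finset {x : α // x ≠ i} => μ (S.image Subtype.val)) ⟨j, hij.symm⟩ :=
  interaction_eq_shapley_diff_general μ i j hij
end

section
/- Let T ⊆ X be nonempty with distinguished element t₁, and let X' = (X\T) ∪ {t₁}. Then the representation index satisfies I_T(μ) = (1/(n−|T|+1)!) Σ_{o ∈ π(X')} Σ_{L ⊆ T} (−1)^{|T|−|L|} μ(Pred_{t₁}(o) ∪ L), where the outer sum is over all orderings of X' and Pred_{t₁}(o) ⊆ X'\{t₁} is the set of predecessors of t₁. -/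
/-!
An ordering `o` of `X'` with predecessor set `K` of `t₁` is the same as an ordering of `K`
followed by `t₁` and an ordering of the remaining `n - |T| - |K|` elements, so exactly
`|K|! (n - |T| - |K|)!` of the `(n - |T| + 1)!` orderings have predecessor set `K`.
Grouping the sum over orderings by predecessor sets therefore yields the coefficients of `I_T`.
-/

open Finset

/-- Grabisch's representation index of a set `T` for a set function `μ`. -/
noncomputable def IT {α : Type*} [Fintype α] [DecidableEq α]
    (μ : Finset α → ℝ) (T : Finset α) : ℝ :=
  ∑ k ∈ range (Fintype.card α - T.card + 1),
    ((Nat.factorial (Fintype.card α - k - T.card) * Nat.factorial k : ℕ) : ℝ) /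
      (Nat.factorial (Fintype.card α - T.card + 1)) *
      ∑ K ∈ (Finset.univ \ T).powersetCard k,
        ∑ L ∈ T.powerset, (-1 : ℝ) ^ (T.card - L.card) * μ (L ∪ K)

namespace Equiv

variable {α β γ : Type*}

def fiberwiseEquiv (f : α → γ) (g : β → γ) :
    {e : α ≃ β // ∀ a, g (e a) = f a} ≃ ∀ c, {a // f a = c} ≃ {b // g b = c} where
  toFun e c := e.1.subtypeEquiv fun a => by rw [e.2 a]
  invFun h := ⟨ofFiberEquiv h, ofFiberEquiv_map h⟩
  left_inv e := by ext a; simp [ofFiberEquiv]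
  right_inv h := by funext c; ext ⟨a, rfl⟩; rfl

open Fintype in
theorem card_fiberwise [Fintype α] [Fintype β] [Fintype γ] [DecidableEq α] [DecidableEq β]
    [DecidableEq γ] {f : α → γ} {g : β → γ}
    (h : ∀ c, card {a // f a = c} = card {b // g b = c}) :
    card {e : α ≃ β // ∀ a, g (e a) = f a} = ∏ c, (card {a // f a = c}).factorial := by
  rw [card_congr (fiberwiseEquiv f g), Fintype.card_pi]
  exact prod_congr rfl fun c _ => card_equiv (equivOfCardEq (h c))

end Equiv

theorem Fintype.prod_ordering {M : Type*} [CommMonoid M] (f : Ordering → M) :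
    ∏ c, f c = f .lt * f .eq * f .gt := by
  simp [Finset.univ, Fintype.elems, mul_assoc]

section Orderings

variable {β : Type*} [Fintype β] {N : ℕ}

def predecessors (o : β ≃ Fin N) (b : β) : Finset β := univ.filter fun x => o x < o b

theorem card_predecessors (o : β ≃ Fin N) (b : β) : #(predecessors o b) = o b := by
  rw [card_equiv o (t := Iio (o b)) (by simp [predecessors]), Fin.card_Iio]

theorem card_predecessors_eq [DecidableEq β] (hN : Fintype.card β = N) {b : β} {K : Finset β}
    (hK : K ⊆ univ.erase b) :
    Fintype.card {o : β ≃ Fin N // predecessors o b = K} =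
      (#K).factorial * (N - 1 - #K).factorial := by
  have hbK : b ∉ K := fun h => by simpa using hK h
  have hKN : #K < N := by
    have := card_le_card hK
    rw [card_erase_of_mem (mem_univ b), card_univ, hN] at this
    have : 0 < N := hN ▸ Fintype.card_pos_iff.2 ⟨b⟩
    omega
  let k : Fin N := ⟨#K, hKN⟩
  -- `o` has predecessor set `K` iff it carries this colouring of `β` to `compare · k` on `Fin N`.
  let colour : β → Ordering := fun x => if x ∈ K then .lt else if x = b then .eq else .gt
  have hfiber :
      ∀ o : β ≃ Fin N, predecessors o b = K ↔ ∀ x, compare (o x) k = colour x := by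
    intro o
    constructor
    · intro h x
      have hob : o b = k := Fin.ext (by rw [← card_predecessors o b, h])
      rw [← hob]
      simp only [colour]
      split_ifs with hxK hxb
      · rw [← h] at hxK
        exact compare_lt_iff_lt.2 (by simpa [predecessors] using hxK)
      · rw [hxb, compare_eq_iff_eq]
      · rw [← h] at hxK
        simp only [predecessors, mem_filter, mem_univ, true_and, not_lt] at hxK
        rw [compare_gt_iff_gt]
        exact lt_of_le_of_ne hxK (o.injective.ne (Ne.symm hxb))
    · intro h
      have hob : o b = k := by simpa [colour, hbK] using h b
      ext x
      have hx := h x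
      simp only [predecessors, mem_filter, mem_univ, true_and, hob, ← compare_lt_iff_lt, hx,
        colour]
      split_ifs <;> simp_all
  have hlt : Fintype.card {i // compare i k = .lt} = #K := by
    simp [Fintype.card_subtype, compare_lt_iff_lt, filter_gt_eq_Iio]; rfl
  have heq : Fintype.card {i // compare i k = .eq} = 1 := by
    simp
  have hgt : Fintype.card {i // compare i k = .gt} = N - 1 - #K := by
    simp [Fintype.card_subtype, compare_gt_iff_gt, filter_lt_eq_Ioi]; rfl
  have hcolour : ∀ c, Fintype.card {x // colour x = c} = Fintype.card {i // compare i k = c} := by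
    intro c
    cases c
    · simp [hlt, Fintype.card_subtype, colour]
    · rw [heq, Fintype.card_subtype]
      have : ({x | colour x = .eq} : Finset β) = {b} := by
        ext x; by_cases x = b <;> simp_all [colour]
      rw [this, card_singleton]
    · rw [hgt, Fintype.card_subtype]
      have : ({x | colour x = .gt} : Finset β) = (insert b K)ᶜ := by
        ext x; simp [colour, and_comm]
      rw [this, card_compl, card_insert_of_notMem hbK, hN]
      omega
  rw [Fintype.card_congr (Equiv.subtypeEquivRight hfiber), Equiv.card_fiberwise hcolour,
    Fintype.prod_ordering, hcolour, hcolour, hcolour, hlt, heq, hgt, Nat.factorial_one, mul_one]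

theorem sum_predecessors [DecidableEq β] {M : Type*} [AddCommMonoid M] (hN : Fintype.card β = N)
    (b : β) (h : Finset β → M) :
    ∑ o : β ≃ Fin N, h (predecessors o b) =
      ∑ K ∈ (univ.erase b).powerset, ((#K).factorial * (N - 1 - #K).factorial) • h K := by
  have hmaps :
      ∀ o ∈ (univ : Finset (β ≃ Fin N)), predecessors o b ∈ (univ.erase b).powerset :=
    fun o _ => mem_powerset.2 fun x hx => mem_erase.2
      ⟨fun hxb => lt_irrefl (o b) (by simp [predecessors, hxb] at hx), mem_univ x⟩
  rw [← sum_fiberwise_of_maps_to hmaps]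
  refine sum_congr rfl fun K hK => ?_
  rw [sum_congr rfl fun o ho => by rw [(mem_filter.1 ho).2], sum_const,
    ← card_predecessors_eq hN (mem_powerset.1 hK), Fintype.card_subtype]

end Orderings

theorem sum_predecessors_subtype {α M : Type*} [DecidableEq α] [AddCommMonoid M] (s : Finset α)
    {b : α} (hb : b ∈ s) (h : Finset α → M) :
    ∑ o : s ≃ Fin #s, h ((predecessors o ⟨b, hb⟩).image Subtype.val) =
      ∑ k ∈ range #s, ∑ K ∈ powersetCard k (s.erase b),
        (k.factorial * (#s - 1 - k).factorial) • h K := by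
  have hs : (univ.erase (⟨b, hb⟩ : s)).map (Function.Embedding.subtype _) = s.erase b := by
    rw [map_erase, univ_eq_attach, attach_map_val]; rfl
  rw [sum_predecessors (Fintype.card_coe s) _ (fun K => h (K.image Subtype.val)), sum_powerset,
    card_erase_of_mem (mem_univ _), card_univ, Fintype.card_coe,
    Nat.sub_add_cancel (card_pos.2 ⟨b, hb⟩)]
  refine sum_congr rfl fun k _ => ?_
  rw [← hs, powersetCard_map, sum_map]
  refine sum_congr rfl fun K hK => ?_
  simp [(mem_powersetCard.1 hK).2, map_eq_image]

theorem IT_orders_general {α : Type*} [Fintype α] [DecidableEq α]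
    (μ : Finset α → ℝ) (T : Finset α) (t₁ : α) (ht : t₁ ∈ T) :
    IT μ T
      = (1 / (Nat.factorial (Fintype.card α - T.card + 1)) : ℝ) *
          ∑ o : {x : α // x ∈ insert t₁ (Finset.univ \ T)} ≃
              Fin ((insert t₁ (Finset.univ \ T)).card),
            ∑ L ∈ T.powerset, (-1 : ℝ) ^ (T.card - L.card) *
              μ (((Finset.univ.filter
                    fun x : {x : α // x ∈ insert t₁ (Finset.univ \ T)} =>
                      o x < o ⟨t₁, Finset.mem_insert_self t₁ _⟩).image Subtype.val) ∪ L) := by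
  have ht₁ : t₁ ∉ univ \ T := fun h => (mem_sdiff.1 h).2 ht
  have hcard : #(insert t₁ (univ \ T)) = Fintype.card α - #T + 1 := by
    rw [card_insert_of_notMem ht₁, card_univ_sdiff]
  erw [sum_predecessors_subtype (insert t₁ (univ \ T)) (mem_insert_self t₁ _)
      (fun P => ∑ L ∈ T.powerset, (-1 : ℝ) ^ (#T - #L) * μ (P ∪ L))]
  rw [erase_insert ht₁, hcard, IT, mul_sum]
  refine sum_congr rfl fun k _ => ?_
  rw [mul_sum, mul_sum]
  refine sum_congr rfl fun K _ => ?_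
  have hk : Fintype.card α - k - #T = Fintype.card α - #T + 1 - 1 - k := by omega
  simp only [union_comm K, nsmul_eq_mul, hk]
  push_cast
  ring

theorem IT_orders {α : Type*} [Fintype α] [DecidableEq α]
    (μ : Finset α → ℝ) (hμ : μ ∅ = 0) (T : Finset α) (t₁ : α) (ht : t₁ ∈ T) :
    IT μ T
      = (1 / (Nat.factorial (Fintype.card α - T.card + 1)) : ℝ) *
          ∑ o : {x : α // x ∈ insert t₁ (Finset.univ \ T)} ≃
              Fin ((insert t₁ (Finset.univ \ T)).card),
            ∑ L ∈ T.powerset, (-1 : ℝ) ^ (T.card - L.card) *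
              μ (((Finset.univ.filter
                    fun x : {x : α // x ∈ insert t₁ (Finset.univ \ T)} =>
                      o x < o ⟨t₁, Finset.mem_insert_self t₁ _⟩).image Subtype.val) ∪ L) :=
  IT_orders_general μ T t₁ ht
end
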